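/- arXiv:2105.08868 — 3 statements merged into one kernel-verified Lean document; each statement's English description precedes it below -/
import Mathlib

section
/- (Worked example, K = 7 and m = 2: full-data identification formula.) Under the mth-order Markov model with K = 7 and m = 2 together with the exponential tilting restriction, for all (y₁,…,y₇) ∈ {0,1}⁷: f(Y₁ = y₁, …, Y₇ = y₇) = [Σ_{o₂,o₃,o₄} f(Y₁,O₂,O₃,O₄)] × [Σ_{o₃,o₄,o₅} f(Y₁,Y₂,O₃,O₄,O₅)] / [Σ_{y₂'} Σ_{o₃,o₄,o₅} f(Y₁,Y₂,O₃,O₄,O₅)] × [Σ_{o₄,o₅,o₆} f(Y₁,Y₂,Y₃,O₄,O₅,O₆)] / [Σ_{y₃'} Σ_{o₄,o₅,o₆} f(Y₁,Y₂,Y₃,O₄,O₅,O₆)] × [Σ_{o₅,o₆,o₇} f(Y₂,Y₃,Y₄,O₅,O₆,O₇)] / [Σ_{y₄'} Σ_{o₅,o₆,o₇} f(Y₂,Y₃,Y₄,O₅,O₆,O₇)] × [Σ_{o₆,o₇} f(Y₃,Y₄,Y₅,O₆,O₇)] / [Σ_{y₅'} Σ_{o₆,o₇} f(Y₃,Y₄,Y₅,O₆,O₇)]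 × [Σ_{o₇} f(Y₄,Y₅,Y₆,O₇)] / [Σ_{y₆'} Σ_{o₇} f(Y₄,Y₅,Y₆,O₇)] × f(Y₅,Y₆,Y₇) / [Σ_{y₇'} f(Y₅,Y₆,Y₇)], where each f(·) denotes the joint pmf of the indicated mixed vector of outcomes and observed data evaluated at the corresponding entries of (y₁,…,y₇), the primed sums replace the last Y-argument by a summation variable, and the o-sums run over the three possible values of each Oⱼ. -/
/-!
Sum out the response indicators in the order `R₁, R₂, …`: the factor `bₖ` is a pmf in `rₖ` and
only looks at `rₖ` and later indicators, so it is the only remaining factor involving `rₖ`, and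
`∑_r ∏ₖ bₖ = 1`. Hence the outcomes alone have the law `∏ₖ aₖ(y)` of an `m`th-order Markov chain,
every sum over observed data in the formula collapses to the marginal of a window of outcomes,
and the formula is the chain rule
`f(y₁, …, y₇) = f(y₁) f(y₂ | y₁) f(y₃ | y₁, y₂) f(y₄ | y₂, y₃) ⋯ f(y₇ | y₅, y₆)`.
Each conditional only depends on the last `m` outcomes: swapping the tails after a position `h`
of two outcome vectors that agree on the `m` positions before `h` preserves the product of their
Markov weights, since each `aₖ` sees only those positions and one of the two pieces.
-/

open scoped Classical BigOperators

namespace MRM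

/-- Observed datum at index `j`: `some (y j)` if `r j = true` (observed), otherwise `none`
(missing, i.e. the value `?`). -/
def obs {K : ℕ} (y r : Fin K → Bool) (j : Fin K) : Option Bool :=
  if r j then some (y j) else none

/-- Probability of an event under the joint pmf `p` on outcomes and response indicators. -/
noncomputable def Pr {K : ℕ} (p : (Fin K → Bool) → (Fin K → Bool) → ℝ)
    (E : (Fin K → Bool) → (Fin K → Bool) → Prop) : ℝ :=
  ∑ y : Fin K → Bool, ∑ r : Fin K → Bool, if E y r then p y r else 0

/-- Conditional probability `P(A | C)` under `p`. -/
noncomputable def cPr {K : ℕ} (p : (Fin K → Bool) → (Fin K → Bool) → ℝ)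
    (A C : (Fin K → Bool) → (Fin K → Bool) → Prop) : ℝ :=
  Pr p (fun y r => A y r ∧ C y r) / Pr p C

/-- Event: the outcomes at the 1-based positions `lo ≤ pos ≤ hi` take the values `yv pos`.
(If `hi < lo`, or the window is out of range, this is the trivial event, matching the
convention that a vector whose lower index exceeds its upper index is the null vector.) -/
def Yeq {K : ℕ} (lo hi : ℕ) (yv : ℕ → Bool) :
    (Fin K → Bool) → (Fin K → Bool) → Prop :=
  fun y _ => ∀ j : Fin K, lo ≤ j.1 + 1 → j.1 + 1 ≤ hi → y j = yv (j.1 + 1)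

/-- Event: the response indicators at positions `lo ≤ pos ≤ hi` take the values `rv pos`. -/
def Req {K : ℕ} (lo hi : ℕ) (rv : ℕ → Bool) :
    (Fin K → Bool) → (Fin K → Bool) → Prop :=
  fun _ r => ∀ j : Fin K, lo ≤ j.1 + 1 → j.1 + 1 ≤ hi → r j = rv (j.1 + 1)

/-- Event: the observed data at positions `lo ≤ pos ≤ hi` take the values `ov pos`. -/
def Oeq {K : ℕ} (lo hi : ℕ) (ov : ℕ → Option Bool) :
    (Fin K → Bool) → (Fin K → Bool) → Prop :=
  fun y r => ∀ j : Fin K, lo ≤ j.1 + 1 → j.1 + 1 ≤ hi → obs y r j = ov (j.1 + 1)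

/-- The `m`-th order Markov model:
`p(y, r) = ∏ₖ aₖ(yₖ | ȳᵐₖ) · bₖ(rₖ | ȳᵐₖ, yₖ, o̲ᵐₖ)`, where `aₖ` and `bₖ` are strictly
positive conditional pmfs in their first argument, `aₖ` depends only on the outcomes at
1-based positions `max(1, k − m), …, k`, and `bₖ` depends only on `rₖ`, the outcomes at
positions `max(1, k − m), …, k` and the observed data at positions `k + 1, …, min(k + m, K)`.
Indices of `Fin K` are 0-based, so the 1-based paper position of `k : Fin K` is `k.1 + 1`. -/
structure Markov (K m : ℕ) where
  p : (Fin K → Bool) → (Fin K → Bool) → ℝ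
  a : Fin K → (Fin K → Bool) → ℝ
  b : Fin K → (Fin K → Bool) → (Fin K → Bool) → ℝ
  a_pos : ∀ k y, 0 < a k y
  b_pos : ∀ k y r, 0 < b k y r
  a_pmf : ∀ (k : Fin K) (y : Fin K → Bool), ∑ v : Bool, a k (Function.update y k v) = 1
  b_pmf : ∀ (k : Fin K) (y r : Fin K → Bool), ∑ v : Bool, b k y (Function.update r k v) = 1
  a_local : ∀ (k : Fin K) (y y' : Fin K → Bool),
    (∀ j : Fin K, k.1 + 1 - m ≤ j.1 + 1 → j.1 ≤ k.1 → y j = y' j) → a k y = a k y'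
  b_local : ∀ (k : Fin K) (y r y' r' : Fin K → Bool), r k = r' k →
    (∀ j : Fin K, k.1 + 1 - m ≤ j.1 + 1 → j.1 ≤ k.1 → y j = y' j) →
    (∀ j : Fin K, k.1 < j.1 → j.1 + 1 ≤ k.1 + 1 + m → obs y r j = obs y' r' j) →
    b k y r = b k y' r'
  factor : ∀ y r, p y r = ∏ k : Fin K, a k y * b k y r
  sum_one : ∑ y : Fin K → Bool, ∑ r : Fin K → Bool, p y r = 1

/-- Real value of a binary outcome. -/
def yVal (v : Bool) : ℝ := if v then 1 else 0

/-- `cₖ(ȳᵐₖ, o̲ᵐₖ; α) = E[exp(α Yₖ) | Rₖ = 1, Ȳᵐₖ = ȳᵐₖ, O̲ᵐₖ = o̲ᵐₖ]` (`k` is 1-based). -/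
noncomputable def cfun {K : ℕ} (p : (Fin K → Bool) → (Fin K → Bool) → ℝ) (m : ℕ) (α : ℝ)
    (k : ℕ) (yv : ℕ → Bool) (ov : ℕ → Option Bool) : ℝ :=
  ∑ v : Bool, Real.exp (α * yVal v) *
    cPr p (Yeq k k (fun _ => v))
      (fun y r => Req k k (fun _ => true) y r ∧ Yeq (k - m) (k - 1) yv y r ∧
        Oeq (k + 1) (k + m) ov y r)

/-- The exponential tilting restriction with sensitivity parameters `α k` (`k` is 1-based):
`f(Yₖ | Rₖ = 0, Ȳᵐₖ, O̲ᵐₖ) = f(Yₖ | Rₖ = 1, Ȳᵐₖ, O̲ᵐₖ) · exp(αₖ Yₖ) / cₖ(Ȳᵐₖ, O̲ᵐₖ; αₖ)`. -/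
def Tilt {K : ℕ} (p : (Fin K → Bool) → (Fin K → Bool) → ℝ) (m : ℕ) (α : ℕ → ℝ) : Prop :=
  ∀ (k : ℕ), 1 ≤ k → k ≤ K → ∀ (yv : ℕ → Bool) (ov : ℕ → Option Bool),
    cPr p (Yeq k k yv)
      (fun y r => Req k k (fun _ => false) y r ∧ Yeq (k - m) (k - 1) yv y r ∧
        Oeq (k + 1) (k + m) ov y r)
    = cPr p (Yeq k k yv)
        (fun y r => Req k k (fun _ => true) y r ∧ Yeq (k - m) (k - 1) yv y r ∧
          Oeq (k + 1) (k + m) ov y r)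
      * Real.exp (α k * yVal (yv k)) / cfun p m (α k) k yv ov

/-- Joint pmf of a mixed vector of outcomes (1-based positions `ylo ≤ pos ≤ yhi`) and
observed data (positions `olo ≤ pos ≤ ohi`), in the worked example `K = 7`, `m = 2`. -/
noncomputable def J7 (M : Markov 7 2) (ylo yhi olo ohi : ℕ)
    (yv : ℕ → Bool) (ov : ℕ → Option Bool) : ℝ :=
  Pr M.p (fun y r => Yeq ylo yhi yv y r ∧ Oeq olo ohi ov y r)

/-- Marginalization over the three possible values of each of `O_{olo}, O_{olo+1}, O_{olo+2}`
of the joint pmf of `(Y_{ylo}, …, Y_{yhi}, O_{olo}, O_{olo+1}, O_{olo+2})`. -/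
noncomputable def S3 (M : Markov 7 2) (ylo yhi olo : ℕ) (yv : ℕ → Bool) : ℝ :=
  ∑ o1 : Option Bool, ∑ o2 : Option Bool, ∑ o3 : Option Bool,
    J7 M ylo yhi olo (olo + 2) yv
      (fun n => if n = olo then o1 else if n = olo + 1 then o2 else o3)

/-- Marginalization over the three possible values of each of `O_{olo}, O_{olo+1}`. -/
noncomputable def S2 (M : Markov 7 2) (ylo yhi olo : ℕ) (yv : ℕ → Bool) : ℝ :=
  ∑ o1 : Option Bool, ∑ o2 : Option Bool,
    J7 M ylo yhi olo (olo + 1) yv (fun n => if n = olo then o1 else o2)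

/-- Marginalization over the three possible values of `O_{olo}`. -/
noncomputable def S1 (M : Markov 7 2) (ylo yhi olo : ℕ) (yv : ℕ → Bool) : ℝ :=
  ∑ o1 : Option Bool, J7 M ylo yhi olo olo yv (fun _ => o1)

theorem sum_prod_eq_one_of_sum_update {α : Type*} [Fintype α] [Nonempty α] :
    ∀ {K : ℕ} (f : Fin K → (Fin K → α) → ℝ),
      (∀ k s s', (∀ j, k ≤ j → s j = s' j) → f k s = f k s') →
      (∀ k s, ∑ v, f k (Function.update s k v) = 1) → ∑ s, ∏ k, f k s = 1
  | 0, _, _, _ => by simp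
  | K + 1, f, hloc, hsum => by
    let v₀ : α := Classical.arbitrary α
    have hshift : ∀ (k : Fin K) v t, f k.succ (Fin.cons v t) = f k.succ (Fin.cons v₀ t) :=
      fun k v t => hloc _ _ _ fun j hj => by
        cases j using Fin.cases with
        | zero => exact absurd hj (Fin.succ_pos k).not_ge
        | succ i => rfl
    have hhead : ∀ t, ∑ v, f 0 (Fin.cons v t) = 1 := fun t => by
      simpa only [Fin.update_cons_zero] using hsum 0 (Fin.cons v₀ t)
    calc ∑ s, ∏ k, f k s = ∑ t, ∑ v, ∏ k, f k (Fin.cons v t) := by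
          rw [← (Fin.consEquiv fun _ => α).sum_comp, Fintype.sum_prod_type, Finset.sum_comm]
          rfl
      _ = ∑ t, ∏ k : Fin K, f k.succ (Fin.cons v₀ t) := by
          simp only [Fin.prod_univ_succ, hshift, ← Finset.sum_mul, hhead, one_mul]
      _ = 1 := sum_prod_eq_one_of_sum_update _ ?_ ?_
    · intro k s s' hss'
      refine hloc _ _ _ fun j hj => ?_
      cases j using Fin.cases with
      | zero => rfl
      | succ i => exact hss' i (Fin.succ_le_succ_iff.mp hj)
    · intro k t
      simpa only [Fin.cons_update] using hsum k.succ (Fin.cons v₀ t)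

theorem forall_window_succ_iff {K lo h : ℕ} (hlo : lo ≤ h + 1) (hK : h < K) (P : Fin K → Prop) :
    (∀ j : Fin K, lo ≤ j.1 + 1 → j.1 + 1 ≤ h + 1 → P j) ↔
      (∀ j : Fin K, lo ≤ j.1 + 1 → j.1 + 1 ≤ h → P j) ∧ P ⟨h, hK⟩ := by
  refine ⟨fun hP => ⟨fun j h₁ h₂ => hP j h₁ (by omega), hP _ hlo le_rfl⟩, ?_⟩
  rintro ⟨hP, hh⟩ j h₁ h₂
  rcases (show j.1 + 1 ≤ h ∨ j.1 = h by omega) with hj | hj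
  · exact hP j h₁ hj
  · rwa [show j = ⟨h, hK⟩ from Fin.ext hj]

theorem pr_congr {K : ℕ} (p : (Fin K → Bool) → (Fin K → Bool) → ℝ)
    {A B : (Fin K → Bool) → (Fin K → Bool) → Prop} (h : ∀ y r, A y r ↔ B y r) :
    Pr p A = Pr p B := by
  unfold Pr
  exact Finset.sum_congr rfl fun y _ => Finset.sum_congr rfl fun r _ => if_congr (h y r) rfl rfl

theorem sum_pr_and_eq {K : ℕ} {β : Type*} [Fintype β] (p : (Fin K → Bool) → (Fin K → Bool) → ℝ)
    (A : (Fin K → Bool) → (Fin K → Bool) → Prop) (x : (Fin K → Bool) → (Fin K → Bool) → β) :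
    ∑ o : β, Pr p (fun y r => A y r ∧ x y r = o) = Pr p A := by
  unfold Pr
  rw [Finset.sum_comm]
  refine Finset.sum_congr rfl fun y _ => ?_
  rw [Finset.sum_comm]
  refine Finset.sum_congr rfl fun r _ => ?_
  by_cases hA : A y r <;> simp [hA]

theorem sum_pr_yeq_update {K lo h : ℕ} (p : (Fin K → Bool) → (Fin K → Bool) → ℝ)
    (hlo : lo ≤ h + 1) (hK : h < K) (yv : ℕ → Bool) :
    ∑ v : Bool, Pr p (Yeq lo (h + 1) (Function.update yv (h + 1) v)) = Pr p (Yeq lo h yv) := by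
  refine .trans ?_ (sum_pr_and_eq p (Yeq lo h yv) fun y _ => y ⟨h, hK⟩)
  refine Finset.sum_congr rfl fun v _ => pr_congr p fun y r => ?_
  refine (forall_window_succ_iff hlo hK _).trans (and_congr (forall_congr' fun j => ?_) ?_)
  · refine imp_congr_right fun _ => imp_congr_right fun hj => ?_
    rw [Function.update_of_ne (by omega)]
  · simp

theorem sum_pr_and_oeq {K lo h : ℕ} (p : (Fin K → Bool) → (Fin K → Bool) → ℝ)
    (A : (Fin K → Bool) → (Fin K → Bool) → Prop) (hlo : lo ≤ h + 1) (hK : h < K)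
    (ov : Option Bool → ℕ → Option Bool) (ov₀ : ℕ → Option Bool)
    (hagree : ∀ o n, lo ≤ n → n ≤ h → ov o n = ov₀ n) (htop : ∀ o, ov o (h + 1) = o) :
    ∑ o : Option Bool, Pr p (fun y r => A y r ∧ Oeq lo (h + 1) (ov o) y r)
      = Pr p (fun y r => A y r ∧ Oeq lo h ov₀ y r) := by
  refine .trans ?_ (sum_pr_and_eq p _ fun y r => obs y r ⟨h, hK⟩)
  refine Finset.sum_congr rfl fun o _ => pr_congr p fun y r => ?_
  rw [Oeq, forall_window_succ_iff hlo hK, and_assoc, htop]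
  refine and_congr_right fun _ => and_congr_left fun _ => forall_congr' fun j => ?_
  exact imp_congr_right fun h₁ => imp_congr_right fun h₂ => by rw [hagree o _ h₁ h₂]

theorem oeq_of_lt {K lo hi : ℕ} (ov : ℕ → Option Bool) (y r : Fin K → Bool) (h : hi < lo) :
    Oeq lo hi ov y r :=
  fun _ h₁ h₂ => absurd (h₁.trans h₂) (by omega)

-- `Yeq lo hi yv` is `fun y _ => yWindow lo hi yv y` by definition.
def yWindow {K : ℕ} (lo hi : ℕ) (yv : ℕ → Bool) (y : Fin K → Bool) : Prop :=
  ∀ j : Fin K, lo ≤ j.1 + 1 → j.1 + 1 ≤ hi → y j = yv (j.1 + 1)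

theorem yWindow_succ_iff {K lo h : ℕ} (hlo : lo ≤ h + 1) (hK : h < K) (yv : ℕ → Bool)
    (y : Fin K → Bool) :
    yWindow lo (h + 1) yv y ↔ yWindow lo h yv y ∧ y ⟨h, hK⟩ = yv (h + 1) :=
  forall_window_succ_iff hlo hK _

theorem yWindow_congr {K lo hi : ℕ} (yv : ℕ → Bool) {y y' : Fin K → Bool}
    (h : ∀ j : Fin K, j.1 < hi → y j = y' j) : yWindow lo hi yv y ↔ yWindow lo hi yv y' :=
  forall_congr' fun j => imp_congr_right fun _ => forall_congr' fun hj => by rw [h j (by omega)]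

def spliceAt {K : ℕ} (h : ℕ) (y z : Fin K → Bool) : Fin K → Bool :=
  fun j => if j.1 < h then y j else z j

theorem spliceAt_spliceAt {K : ℕ} (h : ℕ) (y z : Fin K → Bool) :
    spliceAt h (spliceAt h y z) (spliceAt h z y) = y := by
  funext j
  by_cases hj : j.1 < h <;> simp [spliceAt, hj]

namespace Markov

variable {K m : ℕ} (M : Markov K m)

theorem sum_prod_b (y : Fin K → Bool) : ∑ r, ∏ k, M.b k y r = 1 :=
  sum_prod_eq_one_of_sum_update (fun k r => M.b k y r)
    (fun k r r' h => M.b_local k y r y r' (h k le_rfl) (fun _ _ _ => rfl)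
      fun j hj _ => by simp only [obs, h j hj.le])
    (fun k r => M.b_pmf k y r)

theorem pr_outcomes (Q : (Fin K → Bool) → Prop) :
    Pr M.p (fun y _ => Q y) = ∑ y, if Q y then ∏ k, M.a k y else 0 := by
  refine Finset.sum_congr rfl fun y _ => ?_
  split_ifs with hQ
  · simp only [M.factor, Finset.prod_mul_distrib, ← Finset.mul_sum, M.sum_prod_b, mul_one]
  · simp

theorem pr_yeq (lo hi : ℕ) (yv : ℕ → Bool) :
    Pr M.p (Yeq lo hi yv) = ∑ y, if yWindow lo hi yv y then ∏ k, M.a k y else 0 :=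
  M.pr_outcomes _

theorem pr_yeq_pos (lo hi : ℕ) (yv : ℕ → Bool) : 0 < Pr M.p (Yeq lo hi yv) := by
  have hprod : ∀ y, 0 < ∏ k, M.a k y := fun y => Finset.prod_pos fun k _ => M.a_pos k y
  rw [M.pr_yeq]
  refine Finset.sum_pos' (fun y _ => ?_) ⟨fun j => yv (j.1 + 1), Finset.mem_univ _, ?_⟩
  · split_ifs
    exacts [(hprod y).le, le_rfl]
  · have hwin : yWindow lo hi yv fun j : Fin K => yv (j.1 + 1) := fun _ _ _ => rfl
    rw [if_pos hwin]
    exact hprod _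

theorem prod_a_spliceAt {h : ℕ} {y z : Fin K → Bool}
    (hyz : ∀ j : Fin K, h ≤ j.1 + m → j.1 < h → y j = z j) :
    (∏ k, M.a k (spliceAt h y z)) * ∏ k, M.a k (spliceAt h z y)
      = (∏ k, M.a k y) * ∏ k, M.a k z := by
  rw [← Finset.prod_mul_distrib, ← Finset.prod_mul_distrib]
  refine Finset.prod_congr rfl fun k _ => ?_
  by_cases hk : k.1 < h
  · rw [M.a_local k (spliceAt h y z) y fun j _ hj => if_pos (by omega),
      M.a_local k (spliceAt h z y) z fun j _ hj => if_pos (by omega)]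
  · have hsplice : ∀ j : Fin K, k.1 + 1 - m ≤ j.1 + 1 →
        spliceAt h y z j = z j ∧ spliceAt h z y j = y j := fun j hj => by
      by_cases hjh : j.1 < h
      · simp only [spliceAt, if_pos hjh, hyz j (by omega) hjh, and_self]
      · simp only [spliceAt, if_neg hjh, and_self]
    rw [M.a_local k _ z fun j hj _ => (hsplice j hj).1,
      M.a_local k _ y fun j hj _ => (hsplice j hj).2, mul_comm]

theorem pr_yeq_succ_mul (yv : ℕ → Bool) {lo c h : ℕ} (hlo : lo + m ≤ h + 1) (hc : c + m ≤ h + 1)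
    (hK : h < K) :
    Pr M.p (Yeq lo (h + 1) yv) * Pr M.p (Yeq c h yv)
      = Pr M.p (Yeq lo h yv) * Pr M.p (Yeq c (h + 1) yv) := by
  simp only [M.pr_yeq, Finset.sum_mul_sum, ← Fintype.sum_prod_type']
  have hinv : Function.Involutive
      fun q : (Fin K → Bool) × (Fin K → Bool) => (spliceAt h q.1 q.2, spliceAt h q.2 q.1) :=
    fun q => by simp only [spliceAt_spliceAt]
  refine Fintype.sum_equiv (hinv.toPerm _) _ _ fun ⟨y, z⟩ => ?_
  have hy : yWindow lo h yv (spliceAt h y z) ↔ yWindow lo h yv y :=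
    yWindow_congr yv fun j hj => if_pos hj
  have hz : yWindow c h yv (spliceAt h z y) ↔ yWindow c h yv z :=
    yWindow_congr yv fun j hj => if_pos hj
  have hzh : spliceAt h z y ⟨h, hK⟩ = y ⟨h, hK⟩ := if_neg (lt_irrefl h)
  simp only [Function.Involutive.coe_toPerm, ite_zero_mul_ite_zero,
    yWindow_succ_iff (by omega : lo ≤ h + 1) hK, yWindow_succ_iff (by omega : c ≤ h + 1) hK,
    hy, hz, hzh]
  by_cases hyz : (yWindow lo h yv y ∧ y ⟨h, hK⟩ = yv (h + 1)) ∧ yWindow c h yv z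
  · rw [if_pos hyz, if_pos (by tauto), M.prod_a_spliceAt fun j h₁ h₂ => ?_]
    rw [hyz.1.1 j (by omega) h₂, hyz.2 j (by omega) h₂]
  · rw [if_neg hyz, if_neg (by tauto)]

theorem pr_yeq_succ (yv : ℕ → Bool) {lo c h : ℕ} (hlo : lo + m ≤ h + 1) (hc : c + m ≤ h + 1)
    (hK : h < K) :
    Pr M.p (Yeq lo (h + 1) yv)
      = Pr M.p (Yeq lo h yv) * (Pr M.p (Yeq c (h + 1) yv) / Pr M.p (Yeq c h yv)) := by
  rw [mul_div_assoc', eq_div_iff (M.pr_yeq_pos c h yv).ne', M.pr_yeq_succ_mul yv hlo hc hK]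

end Markov

theorem S3_eq_S2 (M : Markov 7 2) (ylo yhi olo : ℕ) (h7 : olo + 2 ≤ 7) (yv : ℕ → Bool) :
    S3 M ylo yhi olo yv = S2 M ylo yhi olo yv := by
  refine Finset.sum_congr rfl fun o₁ _ => Finset.sum_congr rfl fun o₂ _ => ?_
  exact sum_pr_and_oeq M.p _ (by omega) (by omega) _ _ (fun _ _ _ _ => by grind) fun _ => by grind

theorem S2_eq_S1 (M : Markov 7 2) (ylo yhi olo : ℕ) (h7 : olo + 1 ≤ 7) (yv : ℕ → Bool) :
    S2 M ylo yhi olo yv = S1 M ylo yhi olo yv := by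
  refine Finset.sum_congr rfl fun o₁ _ => ?_
  exact sum_pr_and_oeq M.p _ (by omega) (by omega) _ _ (fun _ _ _ _ => by grind) fun _ => by grind

theorem S1_eq_pr (M : Markov 7 2) (ylo yhi olo : ℕ) (h₁ : 1 ≤ olo) (h7 : olo ≤ 7)
    (yv : ℕ → Bool) : S1 M ylo yhi olo yv = Pr M.p (Yeq ylo yhi yv) := by
  obtain ⟨h, rfl⟩ : ∃ h, olo = h + 1 := ⟨olo - 1, by omega⟩
  refine (sum_pr_and_oeq M.p _ (by omega) (by omega) _ (fun _ => none) (fun _ _ _ _ => by omega)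
    fun _ => rfl).trans (pr_congr M.p fun y r => ?_)
  exact and_iff_left (oeq_of_lt _ y r (by omega))

theorem statement16_general (M : Markov 7 2) (yv : ℕ → Bool) :
    Pr M.p (fun y _ => ∀ j : Fin 7, y j = yv (j.1 + 1))
      = S3 M 1 1 2 yv
        * (S3 M 1 2 3 yv / ∑ v : Bool, S3 M 1 2 3 (Function.update yv 2 v))
        * (S3 M 1 3 4 yv / ∑ v : Bool, S3 M 1 3 4 (Function.update yv 3 v))
        * (S3 M 2 4 5 yv / ∑ v : Bool, S3 M 2 4 5 (Function.update yv 4 v))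
        * (S2 M 3 5 6 yv / ∑ v : Bool, S2 M 3 5 6 (Function.update yv 5 v))
        * (S1 M 4 6 7 yv / ∑ v : Bool, S1 M 4 6 7 (Function.update yv 6 v))
        * (Pr M.p (Yeq 5 7 yv) /
            ∑ v : Bool, Pr M.p (Yeq 5 7 (Function.update yv 7 v))) := by
  have hfull : Pr M.p (fun y _ => ∀ j : Fin 7, y j = yv (j.1 + 1)) = Pr M.p (Yeq 1 7 yv) :=
    pr_congr M.p fun y r => ⟨fun h j _ _ => h j, fun h j => h j (by omega) (by omega)⟩
  simp (disch := omega) only [S3_eq_S2, S2_eq_S1, S1_eq_pr, sum_pr_yeq_update, hfull]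
  rw [mul_div_cancel₀ _ (M.pr_yeq_pos 1 1 yv).ne', mul_div_cancel₀ _ (M.pr_yeq_pos 1 2 yv).ne',
    ← M.pr_yeq_succ (h := 3) yv (by norm_num) (by norm_num) (by norm_num),
    ← M.pr_yeq_succ (h := 4) yv (by norm_num) (by norm_num) (by norm_num),
    ← M.pr_yeq_succ (h := 5) yv (by norm_num) (by norm_num) (by norm_num),
    ← M.pr_yeq_succ (h := 6) yv (by norm_num) (by norm_num) (by norm_num)]

/-- Worked example, `K = 7`, `m = 2`: full-data identification formula.
Under the `m`th-order Markov model with `K = 7` and `m = 2` together with the exponential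
tilting restriction, for all `(y₁, …, y₇) ∈ {0,1}⁷`,
`f(Y₁, …, Y₇)
  = [Σ_{o₂,o₃,o₄} f(Y₁,O₂,O₃,O₄)]
    × [Σ_{o₃,o₄,o₅} f(Y₁,Y₂,O₃,O₄,O₅)] / [Σ_{y₂'} Σ_{o₃,o₄,o₅} f(Y₁,Y₂,O₃,O₄,O₅)]
    × [Σ_{o₄,o₅,o₆} f(Y₁,Y₂,Y₃,O₄,O₅,O₆)] / [Σ_{y₃'} Σ_{o₄,o₅,o₆} f(Y₁,Y₂,Y₃,O₄,O₅,O₆)]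
    × [Σ_{o₅,o₆,o₇} f(Y₂,Y₃,Y₄,O₅,O₆,O₇)] / [Σ_{y₄'} Σ_{o₅,o₆,o₇} f(Y₂,Y₃,Y₄,O₅,O₆,O₇)]
    × [Σ_{o₆,o₇} f(Y₃,Y₄,Y₅,O₆,O₇)] / [Σ_{y₅'} Σ_{o₆,o₇} f(Y₃,Y₄,Y₅,O₆,O₇)]
    × [Σ_{o₇} f(Y₄,Y₅,Y₆,O₇)] / [Σ_{y₆'} Σ_{o₇} f(Y₄,Y₅,Y₆,O₇)]
    × f(Y₅,Y₆,Y₇) / [Σ_{y₇'} f(Y₅,Y₆,Y₇)]`. -/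
theorem statement16 (M : Markov 7 2) (α : ℕ → ℝ) (hT : Tilt M.p 2 α) (yv : ℕ → Bool) :
    Pr M.p (fun y _ => ∀ j : Fin 7, y j = yv (j.1 + 1))
      = S3 M 1 1 2 yv
        * (S3 M 1 2 3 yv / ∑ v : Bool, S3 M 1 2 3 (Function.update yv 2 v))
        * (S3 M 1 3 4 yv / ∑ v : Bool, S3 M 1 3 4 (Function.update yv 3 v))
        * (S3 M 2 4 5 yv / ∑ v : Bool, S3 M 2 4 5 (Function.update yv 4 v))
        * (S2 M 3 5 6 yv / ∑ v : Bool, S2 M 3 5 6 (Function.update yv 5 v))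
        * (S1 M 4 6 7 yv / ∑ v : Bool, S1 M 4 6 7 (Function.update yv 6 v))
        * (Pr M.p (Yeq 5 7 yv) /
            ∑ v : Bool, Pr M.p (Yeq 5 7 (Function.update yv 7 v))) :=
  statement16_general M yv

end MRM
end

section
/- (Worked example, K = 7 and m = 2, step k = 1.) Under the mth-order Markov model with K = 7 and m = 2 together with the exponential tilting restriction, for all values of the variables, f(Y₁, O₂, O₃, O₄) = f(O₄ | R₁ = 1, Y₁, O₂, O₃) · f(Y₁ | R₁ = 1, O₂, O₃) · { P(R₁ = 1 | O₂, O₃) + P(R₁ = 0 | O₂, O₃) · exp(α₁ Y₁) / c₁(O₂, O₃; α₁) } · f(O₂, O₃), where c₁(O₂,O₃;α₁) = E[exp(α₁ Y₁) | R₁ = 1, O₂, O₃]. -/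
/-!
Split `f(Y₁, O₂, …, O_hi)` according to `R₁`. In the Markov factorisation only `b₁` involves
`R₁`, and `b₁` sees the data only through `(Y₁, O₂, …, O_{m+1})`; so flipping `R₁` rescales `p`
by a factor that is constant once these are fixed, and `R₁` is independent of the later data
given them. Hence the `R₁ = 0` term is the `R₁ = 1` term times the odds
`f(Y₁, R₁ = 0 | O₂, …) / f(Y₁, R₁ = 1 | O₂, …)`, which the tilting restriction at `k = 1`
rewrites through `exp(α₁ Y₁) / c₁`.
-/

open scoped Classical BigOperators

namespace MRM

open Function Finset

section Events

variable {K : ℕ} {p : (Fin K → Bool) → (Fin K → Bool) → ℝ}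
  {E F : (Fin K → Bool) → (Fin K → Bool) → Prop}

lemma Pr_congr (h : ∀ y r, E y r ↔ F y r) : Pr p E = Pr p F := by
  simp only [Pr, h]

lemma Pr_mono (hp : ∀ y r, 0 ≤ p y r) (h : ∀ y r, E y r → F y r) : Pr p E ≤ Pr p F := by
  refine sum_le_sum fun y _ => sum_le_sum fun r _ => ?_
  by_cases hE : E y r
  · simp [hE, h y r hE]
  · simp only [hE, if_false]
    split_ifs <;> simp [hp y r]

lemma Pr_pos (hp : ∀ y r, 0 < p y r) (h : ∃ y r, E y r) : 0 < Pr p E := by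
  obtain ⟨y, r, hE⟩ := h
  have hnn : ∀ y r, 0 ≤ if E y r then p y r else 0 := fun y r => by
    split_ifs
    exacts [(hp y r).le, le_rfl]
  exact sum_pos' (fun y _ => sum_nonneg fun r _ => hnn y r)
    ⟨y, mem_univ _, sum_pos' (fun r _ => hnn y r) ⟨r, mem_univ _, by simp [hE, hp y r]⟩⟩

lemma Pr_eq_add_Pr_and_response (i : Fin K) :
    Pr p E = Pr p (fun y r => E y r ∧ r i = true) + Pr p (fun y r => E y r ∧ r i = false) := by
  simp only [Pr, ← sum_add_distrib]
  refine sum_congr rfl fun y _ => sum_congr rfl fun r _ => ?_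
  by_cases h : r i = true <;> simp [h]

lemma Yeq_zero_right {lo : ℕ} (yv : ℕ → Bool) (y r : Fin K → Bool) : Yeq lo 0 yv y r :=
  fun _ _ h => absurd h (Nat.succ_ne_zero _ ∘ Nat.le_zero.mp)

lemma Oeq_append {lo mid hi : ℕ} {ov : ℕ → Option Bool} {y r : Fin K → Bool}
    (h₁ : lo ≤ mid + 1) (h₂ : mid ≤ hi) :
    Oeq lo mid ov y r ∧ Oeq (mid + 1) hi ov y r ↔ Oeq lo hi ov y r := by
  constructor
  · rintro ⟨hl, hr⟩ j hlo hhi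
    by_cases hj : j.1 + 1 ≤ mid
    exacts [hl j hlo hj, hr j (by omega) hhi]
  · intro h
    exact ⟨fun j hlo hj => h j hlo (by omega), fun j hj hhi => h j (by omega) hhi⟩

end Events

section FirstTime

variable {n m : ℕ}

lemma Yeq_one_one_iff {yv : ℕ → Bool} {y r : Fin (n + 1) → Bool} :
    Yeq 1 1 yv y r ↔ y 0 = yv 1 :=
  ⟨fun h => h 0 le_rfl le_rfl, fun h j h₁ h₂ => by
    obtain rfl : j = 0 := Fin.val_eq_zero_iff.mp (by omega)
    exact h⟩

lemma Req_one_one_iff {c : Bool} {y r : Fin (n + 1) → Bool} :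
    Req 1 1 (fun _ => c) y r ↔ r 0 = c :=
  ⟨fun h => h 0 le_rfl le_rfl, fun h j h₁ h₂ => by
    obtain rfl : j = 0 := Fin.val_eq_zero_iff.mp (by omega)
    exact h⟩

variable (p : (Fin (n + 1) → Bool) → (Fin (n + 1) → Bool) → ℝ)
  (A C : (Fin (n + 1) → Bool) → (Fin (n + 1) → Bool) → Prop) (c : Bool)

lemma cPr_and_Req_one_one :
    cPr p A (fun y r => Req 1 1 (fun _ => c) y r ∧ C y r)
      = Pr p (fun y r => (A y r ∧ C y r) ∧ r 0 = c) / Pr p (fun y r => C y r ∧ r 0 = c) := by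
  simp only [cPr, Req_one_one_iff]
  congr 1 <;> exact Pr_congr fun y r => by tauto

lemma cPr_Req_one_one :
    cPr p (Req 1 1 (fun _ => c)) C = Pr p (fun y r => C y r ∧ r 0 = c) / Pr p C := by
  simp only [cPr, Req_one_one_iff, and_comm]

end FirstTime

section Observed

variable {K n m : ℕ}

lemma obs_update_of_ne {y r : Fin K → Bool} {i j : Fin K} (hj : j ≠ i) (v : Bool) :
    obs y (update r i v) j = obs y r j := by
  simp only [obs, update_of_ne hj]

lemma Oeq_update_zero_iff {lo hi : ℕ} {ov : ℕ → Option Bool} {y r : Fin (n + 1) → Bool}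
    (hlo : 2 ≤ lo) (v : Bool) : Oeq lo hi ov y (update r 0 v) ↔ Oeq lo hi ov y r := by
  refine forall_congr' fun j => imp_congr_right fun hj => imp_congr_right fun _ => ?_
  rw [obs_update_of_ne (Fin.val_ne_zero_iff.mp (by omega))]

def obsY (ov : ℕ → Option Bool) : Fin K → Bool := fun j => (ov (j.1 + 1)).getD false

def obsR (ov : ℕ → Option Bool) : Fin K → Bool := fun j => (ov (j.1 + 1)).isSome

lemma obs_obsY_obsR (ov : ℕ → Option Bool) (j : Fin K) :
    obs (obsY ov) (obsR ov) j = ov (j.1 + 1) := by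
  unfold obs obsY obsR
  cases ov (j.1 + 1) <;> rfl

lemma exists_Yeq_Oeq_and_response (yv : ℕ → Bool) (ov : ℕ → Option Bool) (hi : ℕ) (c : Bool) :
    ∃ y r : Fin (n + 1) → Bool, (Yeq 1 1 yv y r ∧ Oeq 2 hi ov y r) ∧ r 0 = c := by
  refine ⟨update (obsY ov) 0 (yv 1), update (obsR ov) 0 c,
    ⟨Yeq_one_one_iff.mpr (update_self ..), fun j hj _ => ?_⟩, update_self ..⟩
  have hj0 : j ≠ 0 := Fin.val_ne_zero_iff.mp (by omega)
  simp only [obs, update_of_ne hj0]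
  exact obs_obsY_obsR ov j

/-- `(y, r)` and `(y', r')` agree on `Y₁, O₂, …, O_{m+1}`, the data `b₁` sees besides `R₁`. -/
def FirstBlockEq (m : ℕ) (y r y' r' : Fin (n + 1) → Bool) : Prop :=
  y 0 = y' 0 ∧ ∀ j : Fin (n + 1), j ≠ 0 → j.1 ≤ m → obs y r j = obs y' r' j

lemma firstBlockEq_of_Yeq_Oeq {yv : ℕ → Bool} {ov : ℕ → Option Bool} {hi : ℕ}
    (hhi : m + 1 ≤ hi) {y r : Fin (n + 1) → Bool} (hy : Yeq 1 1 yv y r) (ho : Oeq 2 hi ov y r) :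
    FirstBlockEq m y r (update (obsY ov) 0 (yv 1)) (obsR ov) := by
  refine ⟨(Yeq_one_one_iff.mp hy).trans (update_self 0 (yv 1) (obsY ov)).symm, fun j hj hjm => ?_⟩
  have hj1 : j.1 ≠ 0 := Fin.val_ne_zero_iff.mpr hj
  rw [ho j (by omega) (by omega), ← obs_obsY_obsR ov j]
  simp only [obs, update_of_ne hj]

end Observed

namespace Markov

variable {K n m : ℕ}

lemma p_pos (M : Markov K m) (y r : Fin K → Bool) : 0 < M.p y r := by
  rw [M.factor]
  exact prod_pos fun k _ => mul_pos (M.a_pos k y) (M.b_pos k y r)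

variable (M : Markov (n + 1) m)

lemma b_update_zero_of_ne {j : Fin (n + 1)} (hj : j ≠ 0) (y r : Fin (n + 1) → Bool) (v : Bool) :
    M.b j y (update r 0 v) = M.b j y r :=
  M.b_local j y _ y r (update_of_ne hj ..) (fun _ _ _ => rfl) fun _ hi _ =>
    obs_update_of_ne (Fin.ne_of_gt ((Fin.zero_le j).trans_lt hi)) v

/-- Only the factor `b₁` sees `R₁`. -/
lemma p_update_zero_mul_b (y r : Fin (n + 1) → Bool) (v : Bool) :
    M.p y (update r 0 v) * M.b 0 y r = M.p y r * M.b 0 y (update r 0 v) := by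
  simp only [M.factor, Fin.prod_univ_succ, M.b_update_zero_of_ne (Fin.succ_ne_zero _)]
  ring

lemma b_zero_update_eq_of_firstBlockEq {y r y' r' : Fin (n + 1) → Bool}
    (h : FirstBlockEq m y r y' r') (c : Bool) :
    M.b 0 y (update r 0 c) = M.b 0 y' (update r' 0 c) := by
  refine M.b_local 0 _ _ _ _ (by simp) (fun j _ hj => ?_) fun j hj hjm => ?_
  · obtain rfl : j = 0 := Fin.val_eq_zero_iff.mp (by rw [Fin.val_zero] at hj; omega)
    exact h.1
  · have hj0 : j ≠ 0 := Fin.ne_of_gt hj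
    rw [obs_update_of_ne hj0, obs_update_of_ne hj0]
    exact h.2 j hj0 (by rw [Fin.val_zero] at hjm; omega)

lemma b_zero_mul_Pr_and_response_false {y₀ r₀ : Fin (n + 1) → Bool}
    {E : (Fin (n + 1) → Bool) → (Fin (n + 1) → Bool) → Prop}
    (hE : ∀ y r v, E y (update r 0 v) ↔ E y r) (hblock : ∀ y r, E y r → FirstBlockEq m y r y₀ r₀) :
    M.b 0 y₀ (update r₀ 0 true) * Pr M.p (fun y r => E y r ∧ r 0 = false)
      = M.b 0 y₀ (update r₀ 0 false) * Pr M.p (fun y r => E y r ∧ r 0 = true) := by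
  have hσ : Involutive fun r : Fin (n + 1) → Bool => update r 0 (!r 0) := fun r => by
    ext j
    by_cases hj : j = 0 <;> simp [hj]
  simp only [Pr, mul_sum]
  refine sum_congr rfl fun y _ => ?_
  rw [← Equiv.sum_comp hσ.toPerm]
  refine sum_congr rfl fun r _ => ?_
  simp only [Involutive.coe_toPerm, update_self, hE, Bool.not_eq_false']
  by_cases h : E y r ∧ r 0 = true
  · obtain ⟨hEr, hr⟩ := h
    have hb := M.b_zero_update_eq_of_firstBlockEq (hblock y r hEr)
    have hr' : update r 0 true = r := by rw [← hr, update_eq_self]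
    simp only [hEr, hr, Bool.not_true, and_self, if_true, ← hb, hr']
    linear_combination M.p_update_zero_mul_b y r false
  · simp only [h, if_false, mul_zero]

/-- Given `(Y₁, O₂, …, O_{m+1})`, the response `R₁` is independent of the rest of the data. -/
lemma Pr_and_response_cross {y₀ r₀ : Fin (n + 1) → Bool}
    {E F : (Fin (n + 1) → Bool) → (Fin (n + 1) → Bool) → Prop}
    (hE : ∀ y r v, E y (update r 0 v) ↔ E y r) (hF : ∀ y r v, F y (update r 0 v) ↔ F y r)
    (hEb : ∀ y r, E y r → FirstBlockEq m y r y₀ r₀) (hFb : ∀ y r, F y r → FirstBlockEq m y r y₀ r₀) :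
    Pr M.p (fun y r => E y r ∧ r 0 = false) * Pr M.p (fun y r => F y r ∧ r 0 = true)
      = Pr M.p (fun y r => E y r ∧ r 0 = true) * Pr M.p (fun y r => F y r ∧ r 0 = false) := by
  have hE' := M.b_zero_mul_Pr_and_response_false hE hEb
  have hF' := M.b_zero_mul_Pr_and_response_false hF hFb
  refine mul_left_cancel₀ (M.b_pos 0 y₀ (update r₀ 0 true)).ne' ?_
  linear_combination Pr M.p (fun y r => F y r ∧ r 0 = true) * hE'
    - Pr M.p (fun y r => E y r ∧ r 0 = true) * hF'

end Markov

lemma Tilt.first_step {n m : ℕ} {p : (Fin (n + 1) → Bool) → (Fin (n + 1) → Bool) → ℝ}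
    {α : ℕ → ℝ} (hT : Tilt p m α) (yv : ℕ → Bool) (ov : ℕ → Option Bool) :
    Pr p (fun y r => (Yeq 1 1 yv y r ∧ Oeq 2 (m + 1) ov y r) ∧ r 0 = false)
        / Pr p (fun y r => Oeq 2 (m + 1) ov y r ∧ r 0 = false)
      = Pr p (fun y r => (Yeq 1 1 yv y r ∧ Oeq 2 (m + 1) ov y r) ∧ r 0 = true)
          / Pr p (fun y r => Oeq 2 (m + 1) ov y r ∧ r 0 = true)
        * Real.exp (α 1 * yVal (yv 1)) / cfun p m (α 1) 1 yv ov := by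
  simpa only [cPr_and_Req_one_one, Nat.sub_self, Yeq_zero_right, true_and, Nat.reduceAdd,
    Nat.add_comm 1 m] using hT 1 le_rfl (by omega) yv ov

lemma add_eq_of_cross_of_tilt {A₁ A₀ B₁ B₀ C₁ C₀ D e c : ℝ} (hB₁ : B₁ ≠ 0) (hC₁ : C₁ ≠ 0)
    (hC₀ : C₀ ≠ 0) (hD : D ≠ 0) (hcross : A₀ * B₁ = A₁ * B₀)
    (htilt : B₀ / C₀ = B₁ / C₁ * e / c) :
    A₁ + A₀ = A₁ / B₁ * (B₁ / C₁) * (C₁ / D + C₀ / D * e / c) * D := by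
  have hec : e / c = B₀ / C₀ / (B₁ / C₁) :=
    eq_div_of_mul_eq (div_ne_zero hB₁ hC₁) (by rw [htilt]; ring)
  rw [mul_div_assoc (C₀ / D), hec]
  field_simp
  linear_combination hcross

theorem Markov.Pr_Yeq_Oeq_factorization {n m : ℕ} (M : Markov (n + 1) m) {α : ℕ → ℝ} (hT : Tilt M.p m α)
    (yv : ℕ → Bool) (ov : ℕ → Option Bool) {hi : ℕ} (hhi : m + 1 ≤ hi) :
    Pr M.p (fun y r => Yeq 1 1 yv y r ∧ Oeq 2 hi ov y r)
      = cPr M.p (Oeq (m + 2) hi ov)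
          (fun y r => Req 1 1 (fun _ => true) y r ∧ Yeq 1 1 yv y r ∧ Oeq 2 (m + 1) ov y r)
        * cPr M.p (Yeq 1 1 yv) (fun y r => Req 1 1 (fun _ => true) y r ∧ Oeq 2 (m + 1) ov y r)
        * (cPr M.p (Req 1 1 (fun _ => true)) (Oeq 2 (m + 1) ov)
            + cPr M.p (Req 1 1 (fun _ => false)) (Oeq 2 (m + 1) ov)
              * Real.exp (α 1 * yVal (yv 1)) / cfun M.p m (α 1) 1 yv ov)
        * Pr M.p (Oeq 2 (m + 1) ov) := by
  have hinv (hi' : ℕ) (y r : Fin (n + 1) → Bool) (v : Bool) :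
      Yeq 1 1 yv y (update r 0 v) ∧ Oeq 2 hi' ov y (update r 0 v) ↔
        Yeq 1 1 yv y r ∧ Oeq 2 hi' ov y r :=
    and_congr Iff.rfl (Oeq_update_zero_iff le_rfl v)
  have hblock {hi' : ℕ} (h : m + 1 ≤ hi') (y r : Fin (n + 1) → Bool)
      (hyo : Yeq 1 1 yv y r ∧ Oeq 2 hi' ov y r) :
      FirstBlockEq m y r (update (obsY ov) 0 (yv 1)) (obsR ov) :=
    firstBlockEq_of_Yeq_Oeq h hyo.1 hyo.2
  have hcross := M.Pr_and_response_cross (hinv hi) (hinv (m + 1)) (hblock hhi) (hblock le_rfl)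
  have hp : ∀ y r, 0 ≤ M.p y r := fun y r => (M.p_pos y r).le
  have hB (c : Bool) : 0 < Pr M.p (fun y r => (Yeq 1 1 yv y r ∧ Oeq 2 (m + 1) ov y r) ∧ r 0 = c) :=
    Pr_pos M.p_pos (exists_Yeq_Oeq_and_response yv ov _ c)
  have hC (c : Bool) : 0 < Pr M.p (fun y r => Oeq 2 (m + 1) ov y r ∧ r 0 = c) :=
    (hB c).trans_le (Pr_mono hp fun _ _ h => ⟨h.1.2, h.2⟩)
  have hD : 0 < Pr M.p (Oeq 2 (m + 1) ov) := (hC true).trans_le (Pr_mono hp fun _ _ h => h.1)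
  have hnum : Pr M.p (fun y r =>
        (Oeq (m + 2) hi ov y r ∧ Yeq 1 1 yv y r ∧ Oeq 2 (m + 1) ov y r) ∧ r 0 = true)
      = Pr M.p (fun y r => (Yeq 1 1 yv y r ∧ Oeq 2 hi ov y r) ∧ r 0 = true) :=
    Pr_congr fun y r => by
      rw [← Oeq_append (lo := 2) (mid := m + 1) (by omega) hhi]
      tauto
  rw [Pr_eq_add_Pr_and_response 0, cPr_and_Req_one_one, cPr_and_Req_one_one, cPr_Req_one_one,
    cPr_Req_one_one, hnum]
  exact add_eq_of_cross_of_tilt (hB true).ne' (hC true).ne' (hC false).ne' hD.ne' hcross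
    (hT.first_step yv ov)

/-- Worked example, `K = 7`, `m = 2`, step `k = 1`.  Under the
`m`th-order Markov model with `K = 7` and `m = 2` together with the exponential tilting
restriction, for all values of the variables,
`f(Y₁, O₂, O₃, O₄)
  = f(O₄ | R₁ = 1, Y₁, O₂, O₃) · f(Y₁ | R₁ = 1, O₂, O₃)
    · { P(R₁ = 1 | O₂, O₃) + P(R₁ = 0 | O₂, O₃) · exp(α₁ Y₁) / c₁(O₂, O₃; α₁) }
    · f(O₂, O₃)`,
where `c₁(O₂,O₃;α₁) = E[exp(α₁ Y₁) | R₁ = 1, O₂, O₃]` (this is `cfun M.p 2 (α 1) 1 yv ov`). -/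
theorem statement17 (M : Markov 7 2) (α : ℕ → ℝ) (hT : Tilt M.p 2 α)
    (yv : ℕ → Bool) (ov : ℕ → Option Bool) :
    Pr M.p (fun y r => Yeq 1 1 yv y r ∧ Oeq 2 4 ov y r)
      = cPr M.p (Oeq 4 4 ov)
          (fun y r => Req 1 1 (fun _ => true) y r ∧ Yeq 1 1 yv y r ∧ Oeq 2 3 ov y r)
        * cPr M.p (Yeq 1 1 yv)
            (fun y r => Req 1 1 (fun _ => true) y r ∧ Oeq 2 3 ov y r)
        * (cPr M.p (Req 1 1 (fun _ => true)) (Oeq 2 3 ov)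
            + cPr M.p (Req 1 1 (fun _ => false)) (Oeq 2 3 ov)
              * Real.exp (α 1 * yVal (yv 1)) / cfun M.p 2 (α 1) 1 yv ov)
        * Pr M.p (Oeq 2 3 ov) :=
  M.Pr_Yeq_Oeq_factorization hT yv ov (by norm_num)

end MRM
end

section
/- (Worked example, K = 7 and m = 2, instance of Lemma 1.) Under the mth-order Markov model with K = 7 and m = 2, the pair (R₁, R₂) is conditionally independent of O₆ given (Y₁, Y₂, O₃, O₄, O₅). -/
open scoped Classical BigOperators

namespace MRM

/-! On the event fixing `Y₁, Y₂, O₃, O₄`, the factors `b₁, b₂` of the Markov factorisation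
depend on the responses only through `R₁, R₂`, and all other factors ignore `R₁, R₂`. Hence
exchanging `(R₁, R₂)` between two points of the conditioning event `C` preserves the product of
their probabilities, and summing over such pairs gives `P(A ∩ B ∩ C) P(C) = P(A ∩ C) P(B ∩ C)`. -/

def splice {K : ℕ} (s : ℕ) (r r' : Fin K → Bool) : Fin K → Bool :=
  fun j => if j.1 < s then r' j else r j

lemma splice_splice {K : ℕ} (s : ℕ) (r r' : Fin K → Bool) :
    splice s (splice s r r') (splice s r' r) = r := by
  funext j
  by_cases h : j.1 < s <;> simp [splice, h]

/-- The rectangle criterion for conditional independence of `A` and `B` given `C`. -/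
theorem sum_ite_mul_sum_ite_eq_of_swap {Ω : Type*} [Fintype Ω] (w : Ω → ℝ)
    (A B C : Ω → Prop) (mix : Ω → Ω → Ω) (hmix : ∀ x x', mix (mix x x') (mix x' x) = x)
    (hA : ∀ x x', A (mix x x') ↔ A x') (hB : ∀ x x', B (mix x x') ↔ B x)
    (hC : ∀ x x', C (mix x x') ↔ C x)
    (hw : ∀ x x', C x → C x' → w (mix x x') * w (mix x' x) = w x * w x') :
    (∑ x, if (A x ∧ B x) ∧ C x then w x else 0) * (∑ x, if C x then w x else 0)
      = (∑ x, if A x ∧ C x then w x else 0) * (∑ x, if B x ∧ C x then w x else 0) := by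
  have hinv : Function.Involutive fun t : Ω × Ω => (mix t.2 t.1, mix t.1 t.2) :=
    fun t => by simp only [hmix]
  rw [Finset.sum_mul_sum, Finset.sum_mul_sum, ← Fintype.sum_prod_type', ← Fintype.sum_prod_type']
  refine Fintype.sum_equiv hinv.toPerm _ _ fun ⟨x, x'⟩ => ?_
  simp only [Function.Involutive.coe_toPerm, hA, hB, hC, ite_zero_mul_ite_zero]
  by_cases h : ((A x ∧ B x) ∧ C x) ∧ C x'
  · rw [if_pos h, if_pos (by tauto), hw x' x h.2 h.1.2, mul_comm]
  · rw [if_neg h, if_neg (by tauto)]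

lemma Pr_eq_sum_prod {K : ℕ} (p : (Fin K → Bool) → (Fin K → Bool) → ℝ)
    (E : (Fin K → Bool) → (Fin K → Bool) → Prop) :
    Pr p E = ∑ x : (Fin K → Bool) × (Fin K → Bool), if E x.1 x.2 then p x.1 x.2 else 0 :=
  (Fintype.sum_prod_type' fun y r => if E y r then p y r else 0).symm

lemma Req_iff_of_eq_of_lt {K s lo hi : ℕ} (hs : hi ≤ s) (rv : ℕ → Bool)
    {y r y' r' : Fin K → Bool} (h : ∀ j : Fin K, j.1 < s → r j = r' j) :
    Req lo hi rv y r ↔ Req lo hi rv y' r' :=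
  forall_congr' fun j => imp_congr_right fun _ => imp_congr_right fun h₂ => by
    rw [h j (by omega)]

lemma Oeq_iff_of_eq_of_le {K s lo hi : ℕ} (hs : s < lo) (ov : ℕ → Option Bool)
    {y r r' : Fin K → Bool} (h : ∀ j : Fin K, s ≤ j.1 → r j = r' j) :
    Oeq lo hi ov y r ↔ Oeq lo hi ov y r' :=
  forall_congr' fun j => imp_congr_right fun h₁ => imp_congr_right fun _ => by
    rw [obs, obs, h j (by omega)]

namespace Markov

variable {K m : ℕ} (M : Markov K m) {s : ℕ}

lemma b_splice_of_le {y r r' : Fin K → Bool} {k : Fin K} (hk : s ≤ k.1) :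
    M.b k y (splice s r r') = M.b k y r :=
  M.b_local k y _ y r (by simp [splice, hk]) (fun _ _ _ => rfl)
    fun j hj _ => by simp [obs, splice, show ¬j.1 < s by omega]

/-- Below `s`, the factor `bₖ` only sees `yⱼ` for `j ≤ k < s` and `oⱼ` for `k < j < s + m`;
those with `j < s` are read off `(y, r')` after splicing. -/
lemma b_splice_of_lt {y r y' r' : Fin K → Bool} (hy : ∀ j : Fin K, j.1 < s → y j = y' j)
    (ho : ∀ j : Fin K, s ≤ j.1 → j.1 < s + m → obs y r j = obs y' r' j) {k : Fin K}
    (hk : k.1 < s) : M.b k y (splice s r r') = M.b k y' r' := by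
  refine M.b_local k _ _ _ _ (by simp [splice, hk]) (fun j _ hj => hy j (by omega)) fun j _ hj => ?_
  by_cases hjs : j.1 < s
  · simp [obs, splice, hjs, hy j hjs]
  · simpa [obs, splice, hjs] using ho j (by omega) (by omega)

lemma p_splice_mul_p_splice {y r y' r' : Fin K → Bool}
    (hy : ∀ j : Fin K, j.1 < s → y j = y' j)
    (ho : ∀ j : Fin K, s ≤ j.1 → j.1 < s + m → obs y r j = obs y' r' j) :
    M.p y (splice s r r') * M.p y' (splice s r' r) = M.p y r * M.p y' r' := by
  simp only [M.factor, ← Finset.prod_mul_distrib]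
  refine Finset.prod_congr rfl fun k _ => ?_
  by_cases hk : k.1 < s
  · rw [M.b_splice_of_lt hy ho hk,
      M.b_splice_of_lt (fun j hj => (hy j hj).symm) (fun j h₁ h₂ => (ho j h₁ h₂).symm) hk]
    ring
  · rw [M.b_splice_of_le (not_lt.1 hk), M.b_splice_of_le (not_lt.1 hk)]

theorem cPr_and_eq_mul_cPr (A B C : (Fin K → Bool) → (Fin K → Bool) → Prop)
    (hA : ∀ y r y' r', (∀ j : Fin K, j.1 < s → r j = r' j) → (A y r ↔ A y' r'))
    (hB : ∀ y r r', (∀ j : Fin K, s ≤ j.1 → r j = r' j) → (B y r ↔ B y r'))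
    (hC : ∀ y r r', (∀ j : Fin K, s ≤ j.1 → r j = r' j) → (C y r ↔ C y r'))
    (hCy : ∀ y r y' r', C y r → C y' r' → ∀ j : Fin K, j.1 < s → y j = y' j)
    (hCo : ∀ y r y' r', C y r → C y' r' →
      ∀ j : Fin K, s ≤ j.1 → j.1 < s + m → obs y r j = obs y' r' j)
    (hpos : Pr M.p C ≠ 0) :
    cPr M.p (fun y r => A y r ∧ B y r) C = cPr M.p A C * cPr M.p B C := by
  have below : ∀ r r' : Fin K → Bool, ∀ j : Fin K, j.1 < s → splice s r r' j = r' j :=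
    fun r r' j hj => by simp [splice, hj]
  have above : ∀ r r' : Fin K → Bool, ∀ j : Fin K, s ≤ j.1 → splice s r r' j = r j :=
    fun r r' j hj => by simp [splice, show ¬j.1 < s by omega]
  have key : Pr M.p (fun y r => (A y r ∧ B y r) ∧ C y r) * Pr M.p C
      = Pr M.p (fun y r => A y r ∧ C y r) * Pr M.p (fun y r => B y r ∧ C y r) := by
    simp only [Pr_eq_sum_prod]
    convert sum_ite_mul_sum_ite_eq_of_swap (fun x => M.p x.1 x.2) (fun x => A x.1 x.2)
      (fun x => B x.1 x.2) (fun x => C x.1 x.2) (fun x x' => (x.1, splice s x.2 x'.2))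
      (fun x x' => by rw [splice_splice])
      (fun x x' => hA _ _ _ _ (below _ _)) (fun x x' => hB _ _ _ (above _ _))
      (fun x x' => hC _ _ _ (above _ _))
      (fun x x' hx hx' => M.p_splice_mul_p_splice (hCy _ _ _ _ hx hx') (hCo _ _ _ _ hx hx'))
  unfold cPr
  field_simp
  linear_combination key

end Markov

/-- Worked example, `K = 7`, `m = 2`, instance of Lemma 1.  Under the
`m`th-order Markov model with `K = 7` and `m = 2`, the pair `(R₁, R₂)` is conditionally
independent of `O₆` given `(Y₁, Y₂, O₃, O₄, O₅)`. -/
theorem statement18 (M : Markov 7 2)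
    (rv : ℕ → Bool) (ovB : ℕ → Option Bool) (yv : ℕ → Bool) (ovC : ℕ → Option Bool)
    (hC : 0 < Pr M.p (fun y r => Yeq 1 2 yv y r ∧ Oeq 3 5 ovC y r)) :
    cPr M.p (fun y r => Req 1 2 rv y r ∧ Oeq 6 6 ovB y r)
        (fun y r => Yeq 1 2 yv y r ∧ Oeq 3 5 ovC y r)
      = cPr M.p (Req 1 2 rv) (fun y r => Yeq 1 2 yv y r ∧ Oeq 3 5 ovC y r)
        * cPr M.p (Oeq 6 6 ovB) (fun y r => Yeq 1 2 yv y r ∧ Oeq 3 5 ovC y r) :=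
  M.cPr_and_eq_mul_cPr (s := 2) _ _ _
    (fun _ _ _ _ h => Req_iff_of_eq_of_lt le_rfl rv h)
    (fun _ _ _ h => Oeq_iff_of_eq_of_le (by norm_num) ovB h)
    (fun _ _ _ h => and_congr Iff.rfl (Oeq_iff_of_eq_of_le (by norm_num) ovC h))
    (fun _ _ _ _ hx hx' j hj => (hx.1 j (by omega) (by omega)).trans
      (hx'.1 j (by omega) (by omega)).symm)
    (fun _ _ _ _ hx hx' j hj₁ hj₂ => (hx.2 j (by omega) (by omega)).trans
      (hx'.2 j (by omega) (by omega)).symm)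
    hC.ne'

end MRM
end
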